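/- arXiv:1506.01602 — 5 statements merged into one kernel-verified Lean document; each statement's English description precedes it below -/
import Mathlib

section
/- Lemma (critical assignment hits a learned clause): Let a derivation C_1,…,C_β consist of α input clauses followed by clauses each of which is either a learned clause or a resolvent of two earlier clauses, with C_β the empty clause. Suppose M is an assignment satisfying all input clauses C_1,…,C_α. Then there exists an index k with α < k ≤ β such that C_k is a learned clause and ¬C_k ⊆ M. -/
/-- Negation of a literal. -/
def Lit.neg {V : Type} (ℓ : V × Bool) : V × Bool := (ℓ.1, !ℓ.2)

/-!
Resolution is sound for a consistent assignment: if `M` satisfies both premises, it satisfies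
the resolvent, because `M` cannot contain both the pivot and its negation. So if `M` satisfied
every learned clause as well as the input clauses, it would satisfy every clause of the
derivation, including the empty one. Hence some learned clause is falsified, and since `M` is
total this means `M` contains the negation of each of its literals.
-/

lemma Lit.neg_mem_iff_not_mem {V : Type} {M : Set (V × Bool)}
    (hM : ∀ v : V, Xor ((v, true) ∈ M) ((v, false) ∈ M)) (ℓ : V × Bool) :
    Lit.neg ℓ ∈ M ↔ ℓ ∉ M := by
  obtain ⟨v, b⟩ := ℓ
  cases b
  · exact xor_iff_iff_not.mp (hM v)
  · exact xor_iff_iff_not.mp (xor_comm _ _ ▸ hM v)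

lemma exists_mem_resolvent_of_consistent {V : Type} [DecidableEq V] {M : Set (V × Bool)}
    (hcons : ∀ ℓ ∈ M, Lit.neg ℓ ∉ M) {c d : Finset (V × Bool)} (ℓ : V × Bool)
    (hc : ∃ x ∈ c, x ∈ M) (hd : ∃ y ∈ d, y ∈ M) :
    ∃ z ∈ c.erase ℓ ∪ d.erase (Lit.neg ℓ), z ∈ M := by
  obtain ⟨x, hxc, hxM⟩ := hc
  obtain ⟨y, hyd, hyM⟩ := hd
  by_cases hxℓ : x = ℓ
  · subst hxℓ
    have hy : y ≠ Lit.neg x := fun h => hcons x hxM (h ▸ hyM)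
    exact ⟨y, Finset.mem_union_right _ (Finset.mem_erase.mpr ⟨hy, hyd⟩), hyM⟩
  · exact ⟨x, Finset.mem_union_left _ (Finset.mem_erase.mpr ⟨hxℓ, hxc⟩), hxM⟩

lemma derivation_sat_of_learned_sat {V : Type} [DecidableEq V] (C : ℕ → Finset (V × Bool))
    (Learned : ℕ → Prop) (α β : ℕ) {M : Set (V × Bool)} (hcons : ∀ ℓ ∈ M, Lit.neg ℓ ∉ M)
    (hder : ∀ k, α ≤ k → k ≤ β → Learned k ∨
      ∃ i < k, ∃ j < k, ∃ ℓ ∈ C i, Lit.neg ℓ ∈ C j ∧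
        C k = (C i).erase ℓ ∪ (C j).erase (Lit.neg ℓ))
    (hinput : ∀ i < α, ∃ ℓ ∈ C i, ℓ ∈ M)
    (hlearned : ∀ k, α ≤ k → k ≤ β → Learned k → ∃ ℓ ∈ C k, ℓ ∈ M) :
    ∀ k ≤ β, ∃ ℓ ∈ C k, ℓ ∈ M := by
  intro k
  induction k using Nat.strong_induction_on with
  | _ k ih =>
    intro hkβ
    by_cases hkα : k < α
    · exact hinput k hkα
    rw [not_lt] at hkα
    rcases hder k hkα hkβ with hL | ⟨i, hi, j, hj, ℓ, -, -, hCk⟩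
    · exact hlearned k hkα hkβ hL
    · rw [hCk]
      exact exists_mem_resolvent_of_consistent hcons ℓ (ih i hi (hi.le.trans hkβ))
        (ih j hj (hj.le.trans hkβ))

theorem stmt3_general {V : Type} [DecidableEq V] (C : ℕ → Finset (V × Bool))
    (Learned : ℕ → Prop) (α β : ℕ)
    (M : Set (V × Bool))
    (hM : ∀ v : V, Xor' ((v, true) ∈ M) ((v, false) ∈ M))
    (hder : ∀ k, α ≤ k → k ≤ β → Learned k ∨
      ∃ i < k, ∃ j < k, ∃ ℓ ∈ C i, Lit.neg ℓ ∈ C j ∧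
        C k = (C i).erase ℓ ∪ (C j).erase (Lit.neg ℓ))
    (hempty : C β = ∅)
    (hinput : ∀ i < α, ∃ ℓ ∈ C i, ℓ ∈ M) :
    ∃ k, α ≤ k ∧ k ≤ β ∧ Learned k ∧ ∀ ℓ ∈ C k, Lit.neg ℓ ∈ M := by
  by_contra! hnone
  have hcons : ∀ ℓ ∈ M, Lit.neg ℓ ∉ M := fun ℓ hℓ hneg =>
    (Lit.neg_mem_iff_not_mem hM ℓ).mp hneg hℓ
  have hlearned : ∀ k, α ≤ k → k ≤ β → Learned k → ∃ ℓ ∈ C k, ℓ ∈ M := by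
    intro k hαk hkβ hL
    obtain ⟨ℓ, hℓ, hneg⟩ := hnone k hαk hkβ hL
    exact ⟨ℓ, hℓ, of_not_not fun h => hneg ((Lit.neg_mem_iff_not_mem hM ℓ).mpr h)⟩
  obtain ⟨ℓ, hℓ, -⟩ :=
    derivation_sat_of_learned_sat C Learned α β hcons hder hinput hlearned β le_rfl
  simp [hempty] at hℓ

/-- Critical assignment hits a learned clause: in a derivation whose input
clauses are the `C i` for `i < α`, whose clauses `C k` for `α ≤ k ≤ β` are each
either learned or a resolvent of two earlier clauses, and which ends in the
empty clause `C β = ∅`, any assignment `M` satisfying all input clauses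
falsifies some learned clause, i.e. there is a learned `C k` with `¬C k ⊆ M`. -/
theorem stmt3 {V : Type} [DecidableEq V] (C : ℕ → Finset (V × Bool))
    (Learned : ℕ → Prop) (α β : ℕ) (hαβ : α ≤ β)
    (M : Set (V × Bool))
    (hM : ∀ v : V, Xor' ((v, true) ∈ M) ((v, false) ∈ M))
    (hder : ∀ k, α ≤ k → k ≤ β → Learned k ∨
      ∃ i < k, ∃ j < k, ∃ ℓ ∈ C i, Lit.neg ℓ ∈ C j ∧
        C k = (C i).erase ℓ ∪ (C j).erase (Lit.neg ℓ))
    (hempty : C β = ∅)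
    (hinput : ∀ i < α, ∃ ℓ ∈ C i, ℓ ∈ M) :
    ∃ k, α ≤ k ∧ k ≤ β ∧ Learned k ∧ ∀ ℓ ∈ C k, Lit.neg ℓ ∈ M :=
  stmt3_general C Learned α β M hM hder hempty hinput
end

section
/- Strengthened critical-assignment lemma: under the hypotheses of the previous statement, if moreover M is a critical assignment—i.e., there is a unique minimal theory-conflict core L, meaning a distinguished set of literals ¬⌈L⌉ ⊆ M such that every learned clause C in the derivation with ¬C ⊆ M satisfies L ⊆ ¬¬C (equivalently ¬⌈L⌉ ⊆ ¬C)—then there exists a learned clause C_k in the derivation with ¬⌈L⌉ ⊆ ¬C_k ⊆ M. -/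
lemma Lit.neg_neg {V : Type} (ℓ : V × Bool) : Lit.neg (Lit.neg ℓ) = ℓ := by
  cases ℓ with | mk v b => cases b <;> rfl

/-- Strengthened critical-assignment lemma: if moreover `M` is critical, i.e.
comes with a distinguished conflict set `NConf ⊆ M` such that every learned
clause `C k` of the derivation falsified by `M` satisfies `NConf ⊆ ¬(C k)`,
then some learned clause `C k` satisfies `NConf ⊆ ¬(C k) ⊆ M`. -/
theorem stmt4 {V : Type} [DecidableEq V] (C : ℕ → Finset (V × Bool))
    (Learned : ℕ → Prop) (α β : ℕ) (hαβ : α ≤ β)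
    (M : Set (V × Bool))
    (hM : ∀ v : V, Xor' ((v, true) ∈ M) ((v, false) ∈ M))
    (hder : ∀ k, α ≤ k → k ≤ β → Learned k ∨
      ∃ i < k, ∃ j < k, ∃ ℓ ∈ C i, Lit.neg ℓ ∈ C j ∧
        C k = (C i).erase ℓ ∪ (C j).erase (Lit.neg ℓ))
    (hempty : C β = ∅)
    (hinput : ∀ i < α, ∃ ℓ ∈ C i, ℓ ∈ M)
    (NConf : Set (V × Bool)) (hNConf : NConf ⊆ M)
    (hcrit : ∀ k, α ≤ k → k ≤ β → Learned k →
      Lit.neg '' (C k : Set (V × Bool)) ⊆ M →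
      NConf ⊆ Lit.neg '' (C k : Set (V × Bool))) :
    ∃ k, α ≤ k ∧ k ≤ β ∧ Learned k ∧
      NConf ⊆ Lit.neg '' (C k : Set (V × Bool)) ∧
      Lit.neg '' (C k : Set (V × Bool)) ⊆ M := by
  have hx : ∀ ℓ : V × Bool, (ℓ ∈ M ↔ Lit.neg ℓ ∉ M) := by
    intro ⟨v, b⟩
    rcases hM v with ⟨h1, h2⟩ | ⟨h1, h2⟩ <;> cases b <;> simp [Lit.neg] <;> tauto
  suffices h : ∀ k, k ≤ β → Lit.neg '' (C k : Set (V × Bool)) ⊆ M →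
      ∃ k', α ≤ k' ∧ k' ≤ β ∧ Learned k' ∧
        Lit.neg '' (C k' : Set (V × Bool)) ⊆ M by
    obtain ⟨k, h1, h2, h3, h4⟩ := h β le_rfl (by simp [hempty])
    exact ⟨k, h1, h2, h3, hcrit k h1 h2 h3 h4, h4⟩
  intro k
  induction k using Nat.strong_induction_on with
  | _ k ih =>
    intro hkβ hfals
    by_cases hkα : α ≤ k
    · rcases hder k hkα hkβ with hl | ⟨i, hik, j, hjk, ℓ, hℓi, hℓj, hCk⟩
      · exact ⟨k, hkα, hkβ, hl, hfals⟩
      · by_cases hℓM : Lit.neg ℓ ∈ M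
        · refine ih i hik (le_of_lt (lt_of_lt_of_le hik hkβ)) ?_
          rintro _ ⟨ℓ', hℓ', rfl⟩
          by_cases hcase : ℓ' = ℓ
          · exact hcase ▸ hℓM
          · exact hfals ⟨ℓ', by simp [hCk, Finset.mem_erase, hcase, hℓ'], rfl⟩
        · have hℓM' : ℓ ∈ M := by
            by_contra hc
            exact hℓM (by rcases hx ℓ with ⟨h1, h2⟩; tauto)
          refine ih j hjk (le_of_lt (lt_of_lt_of_le hjk hkβ)) ?_
          rintro _ ⟨ℓ', hℓ', rfl⟩
          by_cases hcase : ℓ' = Lit.neg ℓ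
          · rw [hcase, Lit.neg_neg]; exact hℓM'
          · exact hfals ⟨ℓ', by simp [hCk, Finset.mem_erase, hcase, hℓ'], rfl⟩
    · exfalso
      obtain ⟨ℓ, hℓC, hℓM⟩ := hinput k (lt_of_not_ge hkα)
      exact (hx ℓ).mp hℓM (hfals ⟨ℓ, hℓC, rfl⟩)
end

section
/- Theorem (non-interfering lower bound): Let C_1,…,C_β be a derivation from α input clauses ending in the empty clause, where every non-input clause is either a learned clause or a resolvent of two earlier clauses. Let Q be a finite set of assignments such that (a) each M ∈ Q satisfies all input clauses, (b) each M ∈ Q has a distinguished conflict set Conf(M) ⊆ M with the property that for every learned clause C with ¬C ⊆ M one has Conf(M) ⊆ ¬C, and (c) Q is non-interfering: for distinct M, M' ∈ Q, Conf(M) ⊄ M'. Then the derivation contains at least |Q| learned clauses. -/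
/-!
Each critical assignment `M ∈ Q` satisfies the input clauses but falsifies the empty clause
`C β`. Since an assignment falsifying a resolvent falsifies one of its two premises, walking
back through the derivation from `C β` along falsified premises must stop at a learned clause
falsified by `M`. If two assignments `M ≠ M'` of `Q` stopped at the same learned clause `C k`,
then `Conf M ⊆ ¬C k ⊆ M'`, contradicting non-interference; so distinct assignments of `Q` are
charged to distinct learned clauses.
-/

namespace Lit

variable {V : Type}

@[simp]
lemma neg_neg_s5 (ℓ : V × Bool) : neg (neg ℓ) = ℓ := by
  simp [neg]

end Lit

section Assignments

variable {V : Type}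

def IsAssignment (M : Set (V × Bool)) : Prop :=
  ∀ v : V, Xor ((v, true) ∈ M) ((v, false) ∈ M)

def Falsifies (M : Set (V × Bool)) (c : Finset (V × Bool)) : Prop :=
  Lit.neg '' (c : Set (V × Bool)) ⊆ M

lemma falsifies_iff {M : Set (V × Bool)} {c : Finset (V × Bool)} :
    Falsifies M c ↔ ∀ ℓ ∈ c, Lit.neg ℓ ∈ M :=
  Set.image_subset_iff

lemma falsifies_empty (M : Set (V × Bool)) : Falsifies M ∅ := by
  simp [Falsifies]

lemma IsAssignment.neg_mem_iff {M : Set (V × Bool)} (hM : IsAssignment M) (ℓ : V × Bool) :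
    Lit.neg ℓ ∈ M ↔ ℓ ∉ M := by
  obtain ⟨v, b⟩ := ℓ
  cases b <;> rcases hM v with ⟨h₁, h₂⟩ | ⟨h₁, h₂⟩ <;> simp_all [Lit.neg]

lemma IsAssignment.not_falsifies {M : Set (V × Bool)} (hM : IsAssignment M)
    {c : Finset (V × Bool)} (hsat : ∃ ℓ ∈ c, ℓ ∈ M) : ¬ Falsifies M c := by
  obtain ⟨ℓ, hℓc, hℓM⟩ := hsat
  intro hfals
  exact (hM.neg_mem_iff ℓ).1 (falsifies_iff.1 hfals ℓ hℓc) hℓM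

lemma IsAssignment.falsifies_or_falsifies_of_resolvent [DecidableEq V] {M : Set (V × Bool)}
    (hM : IsAssignment M) {c d : Finset (V × Bool)} {ℓ : V × Bool}
    (hres : Falsifies M (c.erase ℓ ∪ d.erase (Lit.neg ℓ))) :
    Falsifies M c ∨ Falsifies M d := by
  simp only [falsifies_iff] at hres ⊢
  by_cases hℓM : ℓ ∈ M
  · refine Or.inr fun m hm => ?_
    by_cases hm' : m = Lit.neg ℓ
    · simpa [hm'] using hℓM
    · exact hres m (Finset.mem_union_right _ (Finset.mem_erase.2 ⟨hm', hm⟩))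
  · refine Or.inl fun m hm => ?_
    by_cases hm' : m = ℓ
    · simpa [hm'] using (hM.neg_mem_iff ℓ).2 hℓM
    · exact hres m (Finset.mem_union_left _ (Finset.mem_erase.2 ⟨hm', hm⟩))

end Assignments

section Derivation

variable {V : Type} [DecidableEq V] {C : ℕ → Finset (V × Bool)} {Learned : ℕ → Prop}
  {α β : ℕ} {M : Set (V × Bool)}

lemma exists_learned_falsified_of_falsifies
    (hder : ∀ k, α ≤ k → k ≤ β → Learned k ∨
      ∃ i < k, ∃ j < k, ∃ ℓ ∈ C i, Lit.neg ℓ ∈ C j ∧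
        C k = (C i).erase ℓ ∪ (C j).erase (Lit.neg ℓ))
    (hM : IsAssignment M) (hinput : ∀ i < α, ∃ ℓ ∈ C i, ℓ ∈ M) :
    ∀ k ≤ β, Falsifies M (C k) →
      ∃ k', α ≤ k' ∧ k' ≤ β ∧ Learned k' ∧ Falsifies M (C k') := by
  intro k
  induction k using Nat.strong_induction_on with
  | _ k ih =>
    intro hkβ hfals
    by_cases hkα : k < α
    · exact absurd hfals (hM.not_falsifies (hinput k hkα))
    rcases hder k (not_lt.1 hkα) hkβ with hlearned | ⟨i, hi, j, hj, ℓ, -, -, hCk⟩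
    · exact ⟨k, not_lt.1 hkα, hkβ, hlearned, hfals⟩
    rw [hCk] at hfals
    rcases hM.falsifies_or_falsifies_of_resolvent hfals with hfi | hfj
    · exact ih i hi (by omega) hfi
    · exact ih j hj (by omega) hfj

end Derivation

theorem stmt5_general {V : Type} [DecidableEq V] (C : ℕ → Finset (V × Bool))
    (Learned : ℕ → Prop) [DecidablePred Learned] (α β : ℕ)
    (hder : ∀ k, α ≤ k → k ≤ β → Learned k ∨
      ∃ i < k, ∃ j < k, ∃ ℓ ∈ C i, Lit.neg ℓ ∈ C j ∧
        C k = (C i).erase ℓ ∪ (C j).erase (Lit.neg ℓ))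
    (hempty : C β = ∅)
    (Q : Finset (Set (V × Bool)))
    (Conf : Set (V × Bool) → Set (V × Bool))
    (hQassign : ∀ M ∈ Q, ∀ v : V, Xor' ((v, true) ∈ M) ((v, false) ∈ M))
    (hQinput : ∀ M ∈ Q, ∀ i < α, ∃ ℓ ∈ C i, ℓ ∈ M)
    (hQcrit : ∀ M ∈ Q, ∀ k, α ≤ k → k ≤ β → Learned k →
      Lit.neg '' (C k : Set (V × Bool)) ⊆ M →
      Conf M ⊆ Lit.neg '' (C k : Set (V × Bool)))
    (hnon : ∀ M ∈ Q, ∀ M' ∈ Q, M ≠ M' → ¬ Conf M ⊆ M') :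
    Q.card ≤ ((Finset.Icc α β).filter Learned).card := by
  refine Finset.card_le_card_of_forall_subsingleton (fun M k => Falsifies M (C k)) ?_ ?_
  · intro M hM
    obtain ⟨k, hαk, hkβ, hlearned, hfals⟩ :=
      exists_learned_falsified_of_falsifies hder (hQassign M hM) (hQinput M hM) β le_rfl
        (hempty ▸ falsifies_empty M)
    exact ⟨k, Finset.mem_filter.2 ⟨Finset.mem_Icc.2 ⟨hαk, hkβ⟩, hlearned⟩, hfals⟩
  · intro k hk M ⟨hM, hfals⟩ M' ⟨hM', hfals'⟩
    obtain ⟨hkIcc, hlearned⟩ := Finset.mem_filter.1 hk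
    obtain ⟨hαk, hkβ⟩ := Finset.mem_Icc.1 hkIcc
    by_contra hne
    exact hnon M hM M' hM' hne ((hQcrit M hM k hαk hkβ hlearned hfals).trans hfals')

/-- Non-interfering lower bound: given a derivation from `α` input clauses
ending in the empty clause, and a finite non-interfering set `Q` of critical
assignments (each satisfying the input clauses, with a conflict set contained
in it that is included in the negation of every learned clause it falsifies),
the derivation contains at least `|Q|` learned clauses. -/
theorem stmt5 {V : Type} [DecidableEq V] (C : ℕ → Finset (V × Bool))
    (Learned : ℕ → Prop) [DecidablePred Learned] (α β : ℕ) (hαβ : α ≤ β)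
    (hder : ∀ k, α ≤ k → k ≤ β → Learned k ∨
      ∃ i < k, ∃ j < k, ∃ ℓ ∈ C i, Lit.neg ℓ ∈ C j ∧
        C k = (C i).erase ℓ ∪ (C j).erase (Lit.neg ℓ))
    (hempty : C β = ∅)
    (Q : Finset (Set (V × Bool)))
    (Conf : Set (V × Bool) → Set (V × Bool))
    (hQassign : ∀ M ∈ Q, ∀ v : V, Xor' ((v, true) ∈ M) ((v, false) ∈ M))
    (hQinput : ∀ M ∈ Q, ∀ i < α, ∃ ℓ ∈ C i, ℓ ∈ M)
    (hQconf : ∀ M ∈ Q, Conf M ⊆ M)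
    (hQcrit : ∀ M ∈ Q, ∀ k, α ≤ k → k ≤ β → Learned k →
      Lit.neg '' (C k : Set (V × Bool)) ⊆ M →
      Conf M ⊆ Lit.neg '' (C k : Set (V × Bool)))
    (hnon : ∀ M ∈ Q, ∀ M' ∈ Q, M ≠ M' → ¬ Conf M ⊆ M') :
    Q.card ≤ ((Finset.Icc α β).filter Learned).card :=
  stmt5_general C Learned α β hder hempty Q Conf hQassign hQinput hQcrit hnon
end

section
/- For each permutation π of {1,…,N}, the constraint set {v_{π(1)} = 0} ∪ {v_{π(i)} + 1 = v_{π(i+1)} : 1 ≤ i ≤ N−1} ∪ {v_{π(N)} + 1 = v_assert} ∪ {v_assert > N} over the integers is unsatisfiable, but every proper subset of it obtained by removing exactly one constraint is satisfiable. -/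
/-- The `j`-th constraint (for `0 ≤ j ≤ N+1`) of the chain associated with a
permutation `π`: `j = 0` is `v (π 0) = 0`; `0 < j < N` is
`v (π (j-1)) + 1 = v (π j)`; `j = N` is `v (π (N-1)) + 1 = v_assert`; and
`j = N+1` is `v_assert > N`. -/
def Pcon (N : ℕ) (π : Equiv.Perm (Fin N)) (j : ℕ)
    (v : Fin N → ℤ) (va : ℤ) : Prop :=
  if j = 0 then ∀ h : 0 < N, v (π ⟨0, h⟩) = 0
  else if h : j < N then
    v (π ⟨j - 1, Nat.lt_of_le_of_lt (Nat.sub_le j 1) h⟩) + 1 = v (π ⟨j, h⟩)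
  else if j = N then
    ∀ h : 0 < N, v (π ⟨N - 1, Nat.sub_lt h Nat.one_pos⟩) + 1 = va
  else va > (N : ℤ)

/-- For each permutation `π` of `{1,…,N}` the constraint set
`{v_{π(1)} = 0} ∪ {v_{π(i)} + 1 = v_{π(i+1)}} ∪ {v_{π(N)} + 1 = v_assert}
∪ {v_assert > N}` over ℤ is unsatisfiable, while removing any single
constraint makes it satisfiable. -/
theorem stmt11 (N : ℕ) (hN : 1 ≤ N) (π : Equiv.Perm (Fin N)) :
    (¬ ∃ (v : Fin N → ℤ) (va : ℤ), ∀ j ≤ N + 1, Pcon N π j v va) ∧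
    (∀ j ≤ N + 1, ∃ (v : Fin N → ℤ) (va : ℤ),
      ∀ j' ≤ N + 1, j' ≠ j → Pcon N π j' v va) := by
  constructor
  · rintro ⟨v, va, h⟩
    have key : ∀ i, ∀ hi : i < N, v (π ⟨i, hi⟩) = i := by
      intro i
      induction i with
      | zero =>
        intro hi
        have h0 := h 0 (by omega)
        simp only [Pcon, if_pos rfl] at h0
        simpa using h0 hi
      | succ i ih =>
        intro hi
        have h1 := h (i + 1) (by omega)
        simp only [Pcon, Nat.succ_ne_zero, if_false, dif_pos hi, Nat.add_sub_cancel] at h1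
        rw [ih (by omega)] at h1
        push_cast
        omega
    have hNe := h N (by omega)
    simp only [Pcon, if_neg (by omega : ¬ N = 0), dif_neg (by omega : ¬ N < N),
      if_pos rfl] at hNe
    have hva : va = N := by
      have := key (N - 1) (Nat.sub_lt (by omega) Nat.one_pos)
      have hN2 := hNe (by omega)
      rw [this] at hN2
      omega
    have hgt := h (N + 1) (by omega)
    simp only [Pcon, if_neg (by omega : ¬ N + 1 = 0),
      dif_neg (by omega : ¬ N + 1 < N), if_neg (by omega : ¬ N + 1 = N)] at hgt
    omega
  · intro j hj
    by_cases hj0 : j = 0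
    · subst hj0
      refine ⟨fun i => ((π.symm i : ℕ) : ℤ) + 2, (N : ℤ) + 2, ?_⟩
      intro j' hj' hne
      unfold Pcon
      split_ifs with h1 h2 h3
      · exact absurd h1 hne
      · simp only [Equiv.symm_apply_apply]; push_cast; omega
      · intro _; simp only [Equiv.symm_apply_apply]; push_cast; omega
      · omega
    · by_cases hjN1 : j = N + 1
      · refine ⟨fun i => ((π.symm i : ℕ) : ℤ), (N : ℤ), ?_⟩
        intro j' hj' hne
        unfold Pcon
        split_ifs with h1 h2 h3
        · intro _; simp
        · simp only [Equiv.symm_apply_apply]; push_cast; omega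
        · intro _; simp only [Equiv.symm_apply_apply]; push_cast; omega
        · exact absurd (by omega) hne
      · by_cases hjN : j = N
        · refine ⟨fun i => ((π.symm i : ℕ) : ℤ), (N : ℤ) + 1, ?_⟩
          intro j' hj' hne
          unfold Pcon
          split_ifs with h1 h2 h3
          · intro _; simp
          · simp only [Equiv.symm_apply_apply]; push_cast; omega
          · exact absurd (h3.trans hjN.symm) hne
          · omega
        · -- 0 < j < N
          have hjlt : 0 < j ∧ j < N := by omega
          refine ⟨fun i => ((π.symm i : ℕ) : ℤ) + (if j ≤ (π.symm i : ℕ) then 1 else 0),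
            (N : ℤ) + 1, ?_⟩
          intro j' hj' hne
          unfold Pcon
          split_ifs with h1 h2 h3
          · intro _
            simp only [Equiv.symm_apply_apply]
            rw [if_neg (by omega : ¬ j ≤ (0 : ℕ))]
            simp
          · simp only [Equiv.symm_apply_apply]
            split_ifs <;> push_cast <;> omega
          · intro _
            simp only [Equiv.symm_apply_apply]
            rw [if_pos (by omega : j ≤ N - 1)]
            push_cast
            omega
          · omega
end

section
/- Every ordering of memory events consistent with the constraints of the challenge problem forces the final read value to be at most N; formally: over ℤ, given values v_1, …, v_N, v_assert and a function f : {1,…,N} ∪ {assert} → {init, 1, …, N} (a 'reads-from' choice) such that v_r = 0 whenever f(r) = init and v_r = v_j + 1 whenever f(r) = j ∈ {1,…,N}, and such that the induced reads-from relation is acyclic in the sense that the directed graph with an edge j → r whenever f(r) = j contains no cycle through {1,…,N}, then v_assert ≤ N. -/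
/-- Soundness of the assertion `v_0 ≤ N`: reads are indexed by
`Option (Fin N)` (`some i` is thread `i`'s read, `none` is the assertion
read), writes by `Option (Fin N)` (`some j` is thread `j`'s write, `none` is
the initializing write), and `f` is the reads-from choice. If every read from
the initializing write has value `0`, every read from thread `j`'s write has
value `v j + 1`, and the reads-from relation restricted to the threads is
acyclic, then the assertion read's value is at most `N`. -/
theorem stmt16 (N : ℕ) (v : Fin N → ℤ) (vassert : ℤ)
    (f : Option (Fin N) → Option (Fin N))
    (hval : ∀ r : Option (Fin N),
      (f r = none → r.elim vassert v = 0) ∧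
      (∀ j : Fin N, f r = some j → r.elim vassert v = v j + 1))
    (hacyc : ∀ (i : Fin N) (m : ℕ), 0 < m →
      (fun o : Option (Fin N) => o.bind fun j => f (some j))^[m] (some i) ≠
        some i) :
    vassert ≤ (N : ℤ) := by
  set g : Option (Fin N) → Option (Fin N) :=
    fun o : Option (Fin N) => o.bind fun j => f (some j) with hg
  -- Step 1: if the chain from `some i` reaches `none` in `m` steps, then `v i + 1 ≤ m`.
  have key : ∀ m : ℕ, ∀ i : Fin N, g^[m] (some i) = none → v i + 1 ≤ (m : ℤ) := by
    intro m
    induction m with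
    | zero => intro i h; simp at h
    | succ m ih =>
      intro i h
      rw [Function.iterate_succ_apply] at h
      have hgi : g (some i) = f (some i) := rfl
      cases hf : f (some i) with
      | none =>
        have h0 : v i = 0 := (hval (some i)).1 hf
        push_cast
        rw [h0]; linarith
      | some j =>
        rw [hgi, hf] at h
        have h1 : v i = v j + 1 := (hval (some i)).2 j hf
        have h2 := ih j h
        push_cast
        rw [h1]; linarith
  -- Step 2: every chain reaches `none` within N steps (pigeonhole + acyclicity).
  have reach : ∀ i : Fin N, ∃ m ≤ N, g^[m] (some i) = none := by
    intro i
    by_contra hcon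
    push_neg at hcon
    -- all iterates up to N are some
    have hsome : ∀ m ≤ N, ∃ j : Fin N, g^[m] (some i) = some j := by
      intro m hm
      cases hx : g^[m] (some i) with
      | none => exact absurd hx (hcon m hm)
      | some j => exact ⟨j, rfl⟩
    -- define F : Fin (N+1) → Fin N
    choose F hF using fun m : Fin (N + 1) => hsome m (Nat.lt_succ_iff.mp m.isLt)
    have hninj : ¬ Function.Injective F := by
      intro hinj
      have := Fintype.card_le_of_injective F hinj
      simp at this
    rw [Function.not_injective_iff] at hninj
    obtain ⟨a, b, hFab, hne⟩ := hninj
    -- wlog a < b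
    rcases lt_or_gt_of_ne (fun h => hne (Fin.ext (by exact_mod_cast congrArg Fin.val h))) with hab | hab
    all_goals {
      first
      | (have hlt : (a : ℕ) < (b : ℕ) := hab
         have heq : g^[(a : ℕ)] (some i) = g^[(b : ℕ)] (some i) := by
           rw [hF a, hF b, hFab]
         have hcyc : g^[(b : ℕ) - (a : ℕ)] (some (F a)) = some (F a) := by
           have : g^[(b : ℕ) - (a : ℕ)] (g^[(a : ℕ)] (some i)) = g^[(b : ℕ)] (some i) := by
             rw [← Function.iterate_add_apply]
             congr 1
             omega
           rw [hF a] at this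
           rw [this, ← heq, hF a]
         exact hacyc (F a) ((b : ℕ) - (a : ℕ)) (by omega) hcyc)
      | (have hlt : (b : ℕ) < (a : ℕ) := hab
         have heq : g^[(b : ℕ)] (some i) = g^[(a : ℕ)] (some i) := by
           rw [hF a, hF b, hFab]
         have hcyc : g^[(a : ℕ) - (b : ℕ)] (some (F b)) = some (F b) := by
           have : g^[(a : ℕ) - (b : ℕ)] (g^[(b : ℕ)] (some i)) = g^[(a : ℕ)] (some i) := by
             rw [← Function.iterate_add_apply]
             congr 1
             omega
           rw [hF b] at this
           rw [this, ← heq, hF b]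
         exact hacyc (F b) ((a : ℕ) - (b : ℕ)) (by omega) hcyc)
    }
  -- Conclude
  cases hf : f none with
  | none =>
    have h0 : vassert = 0 := (hval none).1 hf
    rw [h0]; positivity
  | some j =>
    have h1 : vassert = v j + 1 := (hval none).2 j hf
    obtain ⟨m, hm, hmn⟩ := reach j
    have := key m j hmn
    rw [h1]
    have : (m : ℤ) ≤ (N : ℤ) := by exact_mod_cast hm
    linarith [key m j hmn]
end
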